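/- Let p ≥ q ≥ 1 and n ≥ 1. For any real p×q matrix B, the (np+q)-square matrix D and the (np+q)-square matrix C ⊕ 0_{(n-1)(p-q)} are cospectral, i.e., they have the same characteristic polynomial (after transporting along a bijection between their index types, which have equal cardinality np+q). -/

import Mathlib

/-!
`D = E F` and `C = F E`, where `E` is the 0/1 matrix with off-diagonal blocks `[I_q ⋯ I_q]` and
`[I_p; ⋯; I_p]`, and `F = B ⊕ (I_n ⊗ Bᵀ)`. By Sylvester's identity the characteristic
polynomials of `D` and `C` therefore differ only by the factor `X ^ ((q + np) - (p + nq))`, and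
`(q + np) - (p + nq) = (n - 1)(p - q)` is exactly the size of the zero block.
-/

open Matrix

/-- The matrix `C` of Construction I: indexed by `Fin p ⊕ (Fin n × Fin q)`,
first block row `[0, B, B, …, B]`, first block column its transpose, other blocks zero. -/
def matC (p q n : ℕ) (B : Matrix (Fin p) (Fin q) ℝ) :
    Matrix (Fin p ⊕ Fin n × Fin q) (Fin p ⊕ Fin n × Fin q) ℝ :=
  Matrix.of fun a b =>
    match a, b with
    | Sum.inl i, Sum.inr (_, j) => B i j
    | Sum.inr (_, j), Sum.inl i => B i j
    | _, _ => 0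

/-- The matrix `D` of Construction I: indexed by `Fin q ⊕ (Fin n × Fin p)`,
first block row `[0, Bᵀ, Bᵀ, …, Bᵀ]`, first block column its transpose, other blocks zero. -/
def matD (p q n : ℕ) (B : Matrix (Fin p) (Fin q) ℝ) :
    Matrix (Fin q ⊕ Fin n × Fin p) (Fin q ⊕ Fin n × Fin p) ℝ :=
  Matrix.of fun a b =>
    match a, b with
    | Sum.inl j, Sum.inr (_, i) => B i j
    | Sum.inr (_, i), Sum.inl j => B i j
    | _, _ => 0

open Polynomial
open scoped Kronecker

lemma Matrix.charpoly_submatrix_equiv {m n R : Type*} [Fintype m] [DecidableEq m] [Fintype n]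
    [DecidableEq n] [CommRing R] (M : Matrix m m R) (e : n ≃ m) :
    (M.submatrix e e).charpoly = M.charpoly := by
  simpa using charpoly_reindex e.symm M

lemma Nat.add_mul_eq_add_mul_add_pred_mul_sub {p q n : ℕ} (hpq : q ≤ p) (hn : 1 ≤ n) :
    q + n * p = p + n * q + (n - 1) * (p - q) := by
  obtain ⟨d, rfl⟩ := Nat.exists_eq_add_of_le hpq
  obtain ⟨m, rfl⟩ := Nat.exists_eq_add_of_le hn
  simp only [Nat.add_sub_cancel_left]
  ring

def matE (p q n : ℕ) : Matrix (Fin q ⊕ Fin n × Fin p) (Fin p ⊕ Fin n × Fin q) ℝ :=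
  fromBlocks 0 ((1 : Matrix (Fin q) (Fin q) ℝ).submatrix id Prod.snd)
    ((1 : Matrix (Fin p) (Fin p) ℝ).submatrix Prod.snd id) 0

def matF (p q n : ℕ) (B : Matrix (Fin p) (Fin q) ℝ) :
    Matrix (Fin p ⊕ Fin n × Fin q) (Fin q ⊕ Fin n × Fin p) ℝ :=
  fromBlocks B 0 0 (1 ⊗ₖ Bᵀ)

lemma matE_mul_matF (p q n : ℕ) (B : Matrix (Fin p) (Fin q) ℝ) :
    matE p q n * matF p q n B = matD p q n B := by
  ext (j | ⟨k, i⟩) (j' | ⟨k', i'⟩) <;>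
    simp [matE, matF, matD, mul_apply, Fintype.sum_prod_type, one_apply]

lemma matF_mul_matE (p q n : ℕ) (B : Matrix (Fin p) (Fin q) ℝ) :
    matF p q n B * matE p q n = matC p q n B := by
  ext (i | ⟨k, j⟩) (i' | ⟨k', j'⟩) <;>
    simp [matE, matF, matC, mul_apply, Fintype.sum_prod_type, one_apply]

lemma charpoly_matD (p q n : ℕ) (hpq : q ≤ p) (hn : 1 ≤ n) (B : Matrix (Fin p) (Fin q) ℝ) :
    (matD p q n B).charpoly = X ^ ((n - 1) * (p - q)) * (matC p q n B).charpoly := by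
  have hcard := Nat.add_mul_eq_add_mul_add_pred_mul_sub hpq hn
  rw [← matE_mul_matF, ← matF_mul_matE, charpoly_mul_comm_of_le _ _ (by simp; omega)]
  simp [hcard]

theorem construction_I_cospectral (p q n : ℕ) (hpq : q ≤ p) (hn : 1 ≤ n)
    (B : Matrix (Fin p) (Fin q) ℝ) :
    ∃ e : (Fin q ⊕ Fin n × Fin p) ≃ ((Fin p ⊕ Fin n × Fin q) ⊕ Fin ((n - 1) * (p - q))),
      (matD p q n B).charpoly =
        ((Matrix.fromBlocks (matC p q n B) 0 0
            (0 : Matrix (Fin ((n - 1) * (p - q))) (Fin ((n - 1) * (p - q))) ℝ)).submatrix e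
          e).charpoly := by
  have hcard := Nat.add_mul_eq_add_mul_add_pred_mul_sub hpq hn
  refine ⟨Fintype.equivOfCardEq (by simpa using hcard), ?_⟩
  rw [charpoly_submatrix_equiv, charpoly_fromBlocks_zero₂₁, charpoly_zero,
    charpoly_matD p q n hpq hn, Fintype.card_fin, mul_comm]
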